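/- arXiv:1207.0164 — 2 statements merged into one kernel-verified Lean document; each statement's English description precedes it below -/
import Mathlib

section
/- Let J, K ⊂ ℝ^n be convex sets such that J is compact and J ⊕ K is an affine free sum with common point p ∈ ℚ^n, and let r := den(p). Suppose that pllenv(cone J) = (plenv(cone J))_ℤ. Then σ_{cone(J⊕K)}(z) = (1 − z^{rα(p)})·σ_{cone J}(z)·σ_{cone K}(z); coefficientwise, noting rα(p) ∈ ℤ^{n+1}, for every m ∈ ℤ^{n+1}, N_{J,K}(m) − N_{J,K}(m − rα(p)) equals 1 if m ∈ cone(J ⊕ K) and equals 0 otherwise. -/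
open Set Pointwise
open scoped Classical

noncomputable section

namespace ArxivFreeSum

/-- A point of `ℝ^m` is an integer lattice point iff all coordinates are integers. -/
def IsLat {m : ℕ} (x : Fin m → ℝ) : Prop := ∀ i, ∃ z : ℤ, x i = (z : ℝ)

/-- The set of integer lattice points of a set `S`. -/
def latt {m : ℕ} (S : Set (Fin m → ℝ)) : Set (Fin m → ℝ) := {x | x ∈ S ∧ IsLat x}

variable {n : ℕ}

/-- The affine embedding `α : ℝ^n → ℝ^{n+1}`, `a ↦ (a, 1)`. -/
def emb (a : Fin n → ℝ) : Fin (n + 1) → ℝ := Fin.snoc a 1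

/-- The cone over `K`: all nonnegative multiples of `α(K)`. -/
def cone (K : Set (Fin n → ℝ)) : Set (Fin (n + 1) → ℝ) :=
  {x | ∃ l : ℝ, ∃ a ∈ K, 0 ≤ l ∧ x = l • emb a}

/-- The last standard basis vector `e_{n+1}` of `ℝ^{n+1}`. -/
def eLast (n : ℕ) : Fin (n + 1) → ℝ := Pi.single (Fin.last n) 1

/-- The vertical projection `ε_J` onto the lower envelope of `cone J`. -/
def eps (J : Set (Fin n → ℝ)) (x : Fin (n + 1) → ℝ) : Fin (n + 1) → ℝ :=
  x - sSup {l : ℝ | x - l • eLast n ∈ cone J} • eLast n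

/-- The lower envelope of `cone J`. -/
def lenv (J : Set (Fin n → ℝ)) : Set (Fin (n + 1) → ℝ) := eps J '' cone J

/-- The lower lattice envelope of `cone J`. -/
def llenv (J : Set (Fin n → ℝ)) : Set (Fin (n + 1) → ℝ) := eps J '' latt (cone J)

/-- `J ⊕ K` is a free sum. -/
def IsFreeSum (J K : Set (Fin n → ℝ)) : Prop :=
  (0 : Fin n → ℝ) ∈ J ∧ (0 : Fin n → ℝ) ∈ K ∧
    ∀ m : Fin n → ℝ, m ∈ Submodule.span ℝ (J ∪ K) → IsLat m →
      ∃! q : (Fin n → ℝ) × (Fin n → ℝ),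
        (q.1 ∈ Submodule.span ℝ J ∧ IsLat q.1) ∧
        (q.2 ∈ Submodule.span ℝ K ∧ IsLat q.2) ∧ m = q.1 + q.2

/-- `N_{J,K}(m)`: the number of pairs of lattice points of `cone J` and `cone K` summing
to `m`. -/
def Npairs (J K : Set (Fin n → ℝ)) (m : Fin (n + 1) → ℤ) : ℕ :=
  Set.ncard {q : (Fin (n + 1) → ℝ) × (Fin (n + 1) → ℝ) |
    q.1 ∈ latt (cone J) ∧ q.2 ∈ latt (cone K) ∧ q.1 + q.2 = fun i => (m i : ℝ)}

/-- The coefficientwise form of the multivariate Braun equation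
`σ_{cone(J⊕K)} = (1 - z_{n+1}) σ_{cone J} σ_{cone K}`. -/
def BraunEq (J K : Set (Fin n → ℝ)) : Prop :=
  ∀ m : Fin (n + 1) → ℤ,
    (Npairs J K m : ℤ) - (Npairs J K (m - Pi.single (Fin.last n) 1) : ℤ) =
      if (fun i => (m i : ℝ)) ∈ cone (convexHull ℝ (J ∪ K)) then 1 else 0

/-- A rational polytope: convex hull of finitely many rational points. -/
def IsRatPolytope (P : Set (Fin n → ℝ)) : Prop :=
  ∃ V : Finset (Fin n → ℝ), (∀ v ∈ V, ∀ i, ∃ q : ℚ, v i = (q : ℝ)) ∧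
    P = convexHull ℝ (V : Set (Fin n → ℝ))

/-- A lattice polytope: convex hull of finitely many lattice points. -/
def IsLatPolytope (P : Set (Fin n → ℝ)) : Prop :=
  ∃ V : Finset (Fin n → ℝ), (∀ v ∈ V, IsLat v) ∧ P = convexHull ℝ (V : Set (Fin n → ℝ))

/-- The polar dual `P^∨ ⊆ (lin P)^*` of a polytope `P` containing the origin. -/
def dualSet (P : Set (Fin n → ℝ)) : Set (Module.Dual ℝ (Submodule.span ℝ P)) :=
  {φ | ∀ a : Submodule.span ℝ P, (a : Fin n → ℝ) ∈ P → φ a ≤ 1}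

/-- Membership in the dual integer lattice `(lin P)^*_ℤ`. -/
def IsDualLatticePt (P : Set (Fin n → ℝ)) (φ : Module.Dual ℝ (Submodule.span ℝ P)) : Prop :=
  ∀ a : Submodule.span ℝ P, IsLat (a : Fin n → ℝ) → ∃ z : ℤ, φ a = (z : ℝ)

/-- `P^∨` is a lattice polyhedron: every vertex (= extreme point) of `P^∨` lies in the
dual integer lattice. -/
def DualIsLatticePolyhedron (P : Set (Fin n → ℝ)) : Prop :=
  ∀ φ ∈ Set.extremePoints ℝ (dualSet P), IsDualLatticePt P φ

/-- `den(P^∨)`: the smallest positive integer `d` such that `d • P^∨` is a lattice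
polyhedron. -/
def dualDen (P : Set (Fin n → ℝ)) : ℕ :=
  sInf {d : ℕ | 0 < d ∧ ∀ φ ∈ Set.extremePoints ℝ (dualSet P), IsDualLatticePt P ((d : ℝ) • φ)}

/-- `L_P(k)`, with `L_P(0) = 1`. -/
def ehr (P : Set (Fin n → ℝ)) (k : ℕ) : ℕ :=
  if k = 0 then 1 else Set.ncard (latt ((k : ℝ) • P))

/-- The coefficientwise form of `Ehr_{P⊕Q}(t) = (1-t) Ehr_P(t) Ehr_Q(t)`. -/
def EhrEq (P Q : Set (Fin n → ℝ)) : Prop :=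
  ∀ k : ℕ,
    (ehr (convexHull ℝ (P ∪ Q)) k : ℤ) =
      (∑ i ∈ Finset.range (k + 1), (ehr P i : ℤ) * (ehr Q (k - i) : ℤ)) -
        ∑ i ∈ Finset.range k, (ehr P i : ℤ) * (ehr Q (k - 1 - i) : ℤ)

/-- `P` is reflexive: a lattice polytope containing the origin in its relative interior
whose polar dual is a lattice polytope. -/
def IsReflexive (P : Set (Fin n → ℝ)) : Prop :=
  IsLatPolytope P ∧ (0 : Fin n → ℝ) ∈ intrinsicInterior ℝ P ∧ DualIsLatticePolyhedron P

/-- `P` is Gorenstein of index `k`. -/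
def IsGorenstein (P : Set (Fin n → ℝ)) (k : ℕ) : Prop :=
  IsLatPolytope P ∧ 0 < k ∧
    ∃ m : Fin n → ℝ, IsLat m ∧ IsReflexive ((fun x => x - m) '' ((k : ℝ) • P))

/-- `p` is a rational point. -/
def IsRatPt (p : Fin n → ℝ) : Prop := ∀ i, ∃ q : ℚ, p i = (q : ℝ)

/-- Membership in the lattice `Λ^p` generated by `e_1, …, e_n` and `p`. -/
def InLambda (p x : Fin n → ℝ) : Prop :=
  ∃ (z : Fin n → ℤ) (c : ℤ), x = (fun i => (z i : ℝ)) + (c : ℝ) • p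

/-- `den(p)`: the lcm of the denominators of the coordinates of `p`, i.e. the least
positive integer `r` with `r • p` a lattice point. -/
def denPt (p : Fin n → ℝ) : ℕ := sInf {r : ℕ | 0 < r ∧ IsLat ((r : ℝ) • p)}

/-- The projection `ε^p_J` parallel to `α(p)` onto the `p`-lower envelope of `cone J`. -/
def epsP (p : Fin n → ℝ) (J : Set (Fin n → ℝ)) (x : Fin (n + 1) → ℝ) : Fin (n + 1) → ℝ :=
  x - sSup {l : ℝ | x - l • emb p ∈ cone J} • emb p

/-- The `p`-lower envelope of `cone J`. -/
def plenv (p : Fin n → ℝ) (J : Set (Fin n → ℝ)) : Set (Fin (n + 1) → ℝ) := epsP p J '' cone J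

/-- The `p`-lower lattice envelope of `cone J`. -/
def pllenv (p : Fin n → ℝ) (J : Set (Fin n → ℝ)) : Set (Fin (n + 1) → ℝ) :=
  epsP p J '' latt (cone J)

/-- `J ⊕ K` is an affine free sum with common (rational) point `p`. -/
def IsAffineFreeSum (J K : Set (Fin n → ℝ)) (p : Fin n → ℝ) : Prop :=
  IsRatPt p ∧ p ∈ J ∧ p ∈ K ∧
    ((affineSpan ℝ J : Set (Fin n → ℝ)) ∩ (affineSpan ℝ K : Set (Fin n → ℝ)) = {p}) ∧
    ∀ m : Fin n → ℝ, m ∈ Submodule.span ℝ ((fun x => x - p) '' (J ∪ K)) → InLambda p m →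
      ∃! q : (Fin n → ℝ) × (Fin n → ℝ),
        (q.1 ∈ Submodule.span ℝ ((fun x => x - p) '' J) ∧ InLambda p q.1) ∧
        (q.2 ∈ Submodule.span ℝ ((fun x => x - p) '' K) ∧ InLambda p q.2) ∧ m = q.1 + q.2


/-!
Let `Φ` be the projection of `ℝ^{n+1}` onto `ℝ^n` along `α(p)`. It maps `cone J` and `cone K`
into `lin(J - p)` and `lin(K - p)`, which meet only in `0`, so all pairs `(x, y)` counted by
`N_{J,K}(m)` have the same `Φ x`: their first components lie on one line parallel to `α(p)`, on
which consecutive lattice points of `cone J` are `r α(p)` apart. Translating `x` by `r α(p)`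
identifies the pairs counted by `N_{J,K}(m - r α(p))` with the pairs counted by `N_{J,K}(m)` for
which `x - r α(p) ∈ cone J`; at most one pair is left over. If `m ∈ cone (J ⊕ K)`, the lattice
splitting of the free sum puts a lattice point of `cone J` on that line, the envelope hypothesis
makes the lowest point of the line in `cone J` a lattice point, and this point gives the leftover
pair.
-/

section Lattice

variable {m : ℕ} {x y : Fin m → ℝ}

lemma IsLat.add (hx : IsLat x) (hy : IsLat y) : IsLat (x + y) := fun i => by
  obtain ⟨a, ha⟩ := hx i
  obtain ⟨b, hb⟩ := hy i
  exact ⟨a + b, by simp [ha, hb]⟩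

lemma IsLat.sub (hx : IsLat x) (hy : IsLat y) : IsLat (x - y) := fun i => by
  obtain ⟨a, ha⟩ := hx i
  obtain ⟨b, hb⟩ := hy i
  exact ⟨a - b, by simp [ha, hb]⟩

lemma IsLat.natCast_smul (hx : IsLat x) (k : ℕ) : IsLat ((k : ℝ) • x) := fun i => by
  obtain ⟨a, ha⟩ := hx i
  exact ⟨k * a, by simp [ha]⟩

lemma isLat_intCast (z : Fin m → ℤ) : IsLat fun i => (z i : ℝ) := fun i => ⟨z i, rfl⟩

end Lattice

@[simp] lemma emb_castSucc (a : Fin n → ℝ) (i : Fin n) : emb a i.castSucc = a i := by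
  simp [emb]

@[simp] lemma emb_last (a : Fin n → ℝ) : emb a (Fin.last n) = 1 := by
  simp [emb]

lemma continuous_emb : Continuous (emb (n := n)) :=
  Continuous.finSnoc (A := fun _ => ℝ) continuous_id continuous_const

section Cone

variable {C : Set (Fin n → ℝ)} {x y : Fin (n + 1) → ℝ}

lemma last_nonneg_of_mem_cone (hx : x ∈ cone C) : 0 ≤ x (Fin.last n) := by
  obtain ⟨l, a, -, hl, rfl⟩ := hx
  simpa using hl

lemma smul_emb_mem_cone {a : Fin n → ℝ} (ha : a ∈ C) {l : ℝ} (hl : 0 ≤ l) :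
    l • emb a ∈ cone C :=
  ⟨l, a, ha, hl, rfl⟩

lemma cone_mono {D : Set (Fin n → ℝ)} (h : C ⊆ D) : cone C ⊆ cone D := by
  rintro _ ⟨l, a, ha, hl, rfl⟩
  exact smul_emb_mem_cone (h ha) hl

lemma add_mem_cone (hC : Convex ℝ C) (hx : x ∈ cone C) (hy : y ∈ cone C) : x + y ∈ cone C := by
  obtain ⟨l, a, ha, hl, rfl⟩ := hx
  obtain ⟨k, b, hb, hk, rfl⟩ := hy
  rcases (add_nonneg hl hk).eq_or_lt with h0 | h0
  · obtain ⟨rfl, rfl⟩ : l = 0 ∧ k = 0 := ⟨by linarith, by linarith⟩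
    simpa using smul_emb_mem_cone ha le_rfl
  · refine ⟨l + k, (l / (l + k)) • a + (k / (l + k)) • b,
      hC ha hb (by positivity) (by positivity) (by field_simp), h0.le, ?_⟩
    funext j
    refine Fin.lastCases ?_ (fun i => ?_) j
    · simp
    · simp
      field_simp

lemma add_smul_emb_mem_cone (hC : Convex ℝ C) {p : Fin n → ℝ} (hp : p ∈ C) (hx : x ∈ cone C)
    {t : ℝ} (ht : 0 ≤ t) : x + t • emb p ∈ cone C :=
  add_mem_cone hC hx (smul_emb_mem_cone hp ht)

lemma isClosed_cone (hC : IsCompact C) : IsClosed (cone C) := by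
  refine isClosed_of_closure_subset fun x hx => ?_
  let U := {y : Fin (n + 1) → ℝ | y (Fin.last n) < x (Fin.last n) + 1}
  let B := (fun q : ℝ × (Fin n → ℝ) => q.1 • emb q.2) '' (Icc 0 (x (Fin.last n) + 1) ×ˢ C)
  have hB : IsClosed B :=
    ((isCompact_Icc.prod hC).image (continuous_fst.smul (continuous_emb.comp continuous_snd)))
      |>.isClosed
  have hUB : U ∩ cone C ⊆ B := by
    rintro _ ⟨hy, l, a, ha, hl, rfl⟩
    have hlx : l < x (Fin.last n) + 1 := by simpa [U] using hy
    exact ⟨(l, a), ⟨⟨hl, hlx.le⟩, ha⟩, rfl⟩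
  have hxU : x ∈ closure (U ∩ cone C) :=
    (isOpen_lt (continuous_apply _) continuous_const).inter_closure ⟨by simp, hx⟩
  obtain ⟨⟨l, a⟩, ⟨⟨hl, -⟩, ha⟩, rfl⟩ := closure_minimal hUB hB hxU
  exact smul_emb_mem_cone ha hl

lemma cone_convexHull_union {J K : Set (Fin n → ℝ)} (hJ : Convex ℝ J) (hK : Convex ℝ K)
    (hJne : J.Nonempty) (hKne : K.Nonempty) :
    cone (convexHull ℝ (J ∪ K)) = cone J + cone K := by
  apply subset_antisymm
  · rintro _ ⟨l, c, hc, hl, rfl⟩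
    rw [convexHull_union hJne hKne, hJ.convexHull_eq, hK.convexHull_eq, mem_convexJoin] at hc
    obtain ⟨a, ha, b, hb, s, t, hs, ht, hst, rfl⟩ := hc
    refine ⟨(l * s) • emb a, smul_emb_mem_cone ha (mul_nonneg hl hs),
      (l * t) • emb b, smul_emb_mem_cone hb (mul_nonneg hl ht), ?_⟩
    funext j
    refine Fin.lastCases ?_ (fun i => ?_) j
    · simp
      linear_combination l * hst
    · simp
      ring
  · rintro _ ⟨x, hx, y, hy, rfl⟩
    exact add_mem_cone (convex_convexHull ℝ _)
      (cone_mono (subset_union_left.trans (subset_convexHull ℝ _)) hx)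
      (cone_mono (subset_union_right.trans (subset_convexHull ℝ _)) hy)

end Cone

section Projection

variable {p : Fin n → ℝ} {C : Set (Fin n → ℝ)} {x y : Fin (n + 1) → ℝ}

/-- The linear projection of `ℝ^{n+1}` onto `ℝ^n` along `α(p)`; it maps `α(a)` to `a - p`. -/
def projAlong (p : Fin n → ℝ) : (Fin (n + 1) → ℝ) →ₗ[ℝ] Fin n → ℝ :=
  LinearMap.funLeft ℝ ℝ Fin.castSucc - (LinearMap.proj (Fin.last n)).smulRight p

lemma projAlong_apply (p : Fin n → ℝ) (x : Fin (n + 1) → ℝ) :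
    projAlong p x = fun i => x i.castSucc - x (Fin.last n) * p i := by
  ext i
  simp [projAlong]

lemma projAlong_emb (p a : Fin n → ℝ) : projAlong p (emb a) = a - p := by
  ext i
  simp [projAlong_apply]

lemma projAlong_emb_self (p : Fin n → ℝ) : projAlong p (emb p) = 0 := by
  rw [projAlong_emb, sub_self]

lemma projAlong_mem_span (hx : x ∈ cone C) :
    projAlong p x ∈ Submodule.span ℝ ((· - p) '' C) := by
  obtain ⟨l, a, ha, -, rfl⟩ := hx
  rw [map_smul, projAlong_emb]
  exact Submodule.smul_mem _ l (Submodule.subset_span ⟨a, ha, rfl⟩)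

lemma eq_add_smul_emb_of_projAlong_eq (h : projAlong p x = projAlong p y) :
    y = x + (y (Fin.last n) - x (Fin.last n)) • emb p := by
  funext j
  refine Fin.lastCases ?_ (fun i => ?_) j
  · simp
  · have hi := congrFun h i
    simp only [projAlong_apply] at hi
    simp
    linarith

end Projection

section Envelope

variable {p : Fin n → ℝ} {J : Set (Fin n → ℝ)} {x : Fin (n + 1) → ℝ}

lemma bddAbove_sub_smul_emb_mem_cone (p : Fin n → ℝ) (J : Set (Fin n → ℝ))
    (x : Fin (n + 1) → ℝ) : BddAbove {t : ℝ | x - t • emb p ∈ cone J} :=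
  ⟨x (Fin.last n), fun t ht => by simpa using last_nonneg_of_mem_cone ht⟩

lemma epsP_mem_cone (hJ : IsCompact J) (hx : x ∈ cone J) : epsP p J x ∈ cone J :=
  IsClosed.csSup_mem (s := {t : ℝ | x - t • emb p ∈ cone J})
    ((isClosed_cone hJ).preimage (by fun_prop)) ⟨0, by simpa using hx⟩
    (bddAbove_sub_smul_emb_mem_cone p J x)

lemma epsP_sub_smul_emb_notMem_cone {t : ℝ} (ht : 0 < t) : epsP p J x - t • emb p ∉ cone J := by
  intro h
  have : sSup {t : ℝ | x - t • emb p ∈ cone J} + t ≤ sSup {t : ℝ | x - t • emb p ∈ cone J} :=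
    le_csSup (bddAbove_sub_smul_emb_mem_cone p J x) (by simpa [epsP, add_smul, sub_sub] using h)
  linarith

lemma projAlong_epsP : projAlong p (epsP p J x) = projAlong p x := by
  simp [epsP, projAlong_emb_self]

end Envelope

section Denominator

variable {p : Fin n → ℝ}

lemma denPt_pos_and_isLat (hp : IsRatPt p) : 0 < denPt p ∧ IsLat ((denPt p : ℝ) • p) := by
  choose q hq using hp
  refine Nat.sInf_mem (s := {r : ℕ | 0 < r ∧ IsLat ((r : ℝ) • p)})
    ⟨∏ i, (q i).den, Finset.prod_pos fun i _ => (q i).pos, fun i => ?_⟩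
  obtain ⟨k, hk⟩ := Finset.dvd_prod_of_mem (fun j => (q j).den) (Finset.mem_univ i)
  refine ⟨k * (q i).num, ?_⟩
  have hnum : ((q i).den : ℝ) * (q i) = (q i).num := by exact_mod_cast Rat.den_mul_eq_num (q i)
  simp only [Pi.smul_apply, smul_eq_mul, hq i, hk]
  push_cast
  rw [mul_comm ((q i).den : ℝ), mul_assoc, hnum]

lemma isLat_denPt_smul_emb (hp : IsRatPt p) : IsLat ((denPt p : ℝ) • emb p) := by
  intro j
  refine Fin.lastCases (motive := fun j => ∃ z : ℤ, ((denPt p : ℝ) • emb p) j = z)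
    ⟨denPt p, by simp⟩ (fun i => ?_) j
  simpa using (denPt_pos_and_isLat hp).2 i

lemma denPt_le_of_isLat_smul_emb {t : ℝ} (ht : 0 < t) (h : IsLat (t • emb p)) :
    (denPt p : ℝ) ≤ t := by
  obtain ⟨k, hk⟩ := h (Fin.last n)
  simp only [Pi.smul_apply, emb_last, smul_eq_mul, mul_one] at hk
  subst hk
  lift k to ℕ using by exact_mod_cast ht.le
  have : denPt p ≤ k := Nat.sInf_le ⟨by exact_mod_cast ht, fun i => by simpa using h i.castSucc⟩
  exact_mod_cast this

end Denominator

section FreeSum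

lemma eq_of_add_eq_add_of_disjoint {R M : Type*} [Ring R] [AddCommGroup M] [Module R M]
    {V W : Submodule R M} (hVW : Disjoint V W) {a a' b b' : M} (ha : a ∈ V) (ha' : a' ∈ V)
    (hb : b ∈ W) (hb' : b' ∈ W) (h : a + b = a' + b') : a = a' := by
  have hW : a - a' ∈ W := by
    rw [show a - a' = b' - b by rw [sub_eq_sub_iff_add_eq_add, h, add_comm]]
    exact W.sub_mem hb' hb
  exact sub_eq_zero.1 (Submodule.disjoint_def.1 hVW _ (V.sub_mem ha ha') hW)

variable {p : Fin n → ℝ} {J K : Set (Fin n → ℝ)}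

lemma disjoint_span_sub (hpJ : p ∈ J) (hpK : p ∈ K)
    (h : (affineSpan ℝ J : Set (Fin n → ℝ)) ∩ affineSpan ℝ K = {p}) :
    Disjoint (Submodule.span ℝ ((· - p) '' J)) (Submodule.span ℝ ((· - p) '' K)) := by
  refine Submodule.disjoint_def.2 fun d hdJ hdK => ?_
  have hmem (C : Set (Fin n → ℝ)) (hpC : p ∈ C) (hd : d ∈ Submodule.span ℝ ((· - p) '' C)) :
      d + p ∈ (affineSpan ℝ C : Set (Fin n → ℝ)) := by
    simp_rw [← vsub_eq_sub] at hd
    rw [← vectorSpan_eq_span_vsub_set_right ℝ hpC, ← direction_affineSpan] at hd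
    exact AffineSubspace.vadd_mem_of_mem_direction hd (mem_affineSpan ℝ hpC)
  have : d + p ∈ ({p} : Set (Fin n → ℝ)) := h ▸ ⟨hmem J hpJ hdJ, hmem K hpK hdK⟩
  simpa using this

lemma projAlong_eq_of_add_eq_add
    (hJK : Disjoint (Submodule.span ℝ ((· - p) '' J)) (Submodule.span ℝ ((· - p) '' K)))
    {x x' y y' : Fin (n + 1) → ℝ} (hx : x ∈ cone J) (hx' : x' ∈ cone J) (hy : y ∈ cone K)
    (hy' : y' ∈ cone K) (h : x + y = x' + y') : projAlong p x = projAlong p x' :=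
  eq_of_add_eq_add_of_disjoint hJK (projAlong_mem_span hx) (projAlong_mem_span hx')
    (projAlong_mem_span hy) (projAlong_mem_span hy') (by rw [← map_add, h, map_add])

end FreeSum

lemma IsLat.inLambda_projAlong {p : Fin n → ℝ} {x : Fin (n + 1) → ℝ} (hx : IsLat x) :
    InLambda p (projAlong p x) := by
  choose z hz using hx
  refine ⟨fun i => z i.castSucc, -z (Fin.last n), ?_⟩
  ext i
  simp [projAlong_apply, hz]
  ring

def pairs (J K : Set (Fin n → ℝ)) (m : Fin (n + 1) → ℝ) :
    Set ((Fin (n + 1) → ℝ) × (Fin (n + 1) → ℝ)) :=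
  {q | q.1 ∈ latt (cone J) ∧ q.2 ∈ latt (cone K) ∧ q.1 + q.2 = m}

lemma Npairs_eq_ncard_pairs (J K : Set (Fin n → ℝ)) (m : Fin (n + 1) → ℤ) :
    Npairs J K m = (pairs J K fun i => (m i : ℝ)).ncard :=
  rfl

section Pairs

variable {p : Fin n → ℝ} {J K : Set (Fin n → ℝ)} {m : Fin (n + 1) → ℝ}

lemma pairs_finite
    (hJK : Disjoint (Submodule.span ℝ ((· - p) '' J)) (Submodule.span ℝ ((· - p) '' K))) :
    (pairs J K m).Finite := by
  refine Set.Finite.of_finite_image (f := fun q => q.1 (Fin.last n))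
    (((Set.finite_Icc 0 ⌊m (Fin.last n)⌋).image (Int.cast : ℤ → ℝ)).subset ?_) ?_
  · rintro _ ⟨q, ⟨⟨hx, hxl⟩, ⟨hy, -⟩, hxy⟩, rfl⟩
    obtain ⟨k, hk⟩ := hxl (Fin.last n)
    have hk0 : (0 : ℝ) ≤ k := hk ▸ last_nonneg_of_mem_cone hx
    have hkm : (k : ℝ) ≤ m (Fin.last n) := by
      have := last_nonneg_of_mem_cone hy
      rw [← hxy, Pi.add_apply, hk]
      linarith
    exact ⟨k, ⟨by exact_mod_cast hk0, Int.le_floor.2 hkm⟩, hk.symm⟩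
  · rintro ⟨x, y⟩ ⟨⟨hx, -⟩, ⟨hy, -⟩, hxy⟩ ⟨x', y'⟩ ⟨⟨hx', -⟩, ⟨hy', -⟩, hxy'⟩ hlast
    dsimp only at hx hy hxy hx' hy' hxy' hlast
    have hproj := projAlong_eq_of_add_eq_add hJK hx hx' hy hy' (hxy.trans hxy'.symm)
    obtain rfl : x' = x := by
      rw [eq_add_smul_emb_of_projAlong_eq hproj, hlast, sub_self, zero_smul, add_zero]
    obtain rfl : y' = y := add_left_cancel (hxy'.trans hxy.symm)
    rfl

lemma ncard_pairs_sub_smul_emb (hJ : Convex ℝ J) (hpJ : p ∈ J) {t : ℝ} (ht : 0 ≤ t)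
    (hlat : IsLat (t • emb p)) :
    (pairs J K (m - t • emb p)).ncard = (pairs J K m ∩ {q | q.1 - t • emb p ∈ cone J}).ncard := by
  rw [← Set.ncard_image_of_injective _
    ((add_left_injective (t • emb p)).prodMap Function.injective_id)]
  congr 1
  ext ⟨x, y⟩
  constructor
  · rintro ⟨⟨x₀, y₀⟩, ⟨⟨hx₀, hx₀l⟩, hy₀, hsum⟩, h⟩
    simp only [Prod.map, Prod.mk.injEq, id] at h
    obtain ⟨rfl, rfl⟩ := h
    refine ⟨⟨⟨add_smul_emb_mem_cone hJ hpJ hx₀ ht, hx₀l.add hlat⟩, hy₀, ?_⟩, by simpa using hx₀⟩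
    rw [add_right_comm, hsum, sub_add_cancel]
  · rintro ⟨⟨⟨hx, hxl⟩, hy, hsum⟩, hxt⟩
    refine ⟨(x - t • emb p, y), ⟨⟨hxt, hxl.sub hlat⟩, hy, ?_⟩, by simp⟩
    rw [sub_add_eq_add_sub, hsum]

lemma subsingleton_pairs_sdiff (hJ : Convex ℝ J) (hpJ : p ∈ J)
    (hJK : Disjoint (Submodule.span ℝ ((· - p) '' J)) (Submodule.span ℝ ((· - p) '' K))) :
    (pairs J K m \ {q | q.1 - (denPt p : ℝ) • emb p ∈ cone J}).Subsingleton := by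
  suffices key : ∀ q ∈ pairs J K m,
      ∀ q' ∈ pairs J K m \ {q | q.1 - (denPt p : ℝ) • emb p ∈ cone J},
      q.1 (Fin.last n) ≤ q'.1 (Fin.last n) → q = q' by
    intro q hq q' hq'
    rcases le_total (q.1 (Fin.last n)) (q'.1 (Fin.last n)) with h | h
    exacts [key q hq.1 q' hq' h, (key q' hq'.1 q hq h).symm]
  rintro ⟨x, y⟩ ⟨⟨hx, hxl⟩, ⟨hy, -⟩, hxy⟩ ⟨x', y'⟩ ⟨⟨⟨hx', hx'l⟩, ⟨hy', -⟩, hxy'⟩, hx'r⟩ hle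
  dsimp only at hx hxl hy hxy hx' hx'l hy' hxy' hle
  have hx' := eq_add_smul_emb_of_projAlong_eq
    (projAlong_eq_of_add_eq_add hJK hx hx' hy hy' (hxy.trans hxy'.symm))
  generalize ht : x' (Fin.last n) - x (Fin.last n) = t at hx'
  obtain rfl : x' = x := by
    rcases hle.eq_or_lt with h | h
    · rw [← h, sub_self] at ht
      rwa [← ht, zero_smul, add_zero] at hx'
    refine absurd ?_ hx'r
    -- distinct lattice points on a line parallel to `α(p)` are at least `den(p) α(p)` apart
    have hr : (denPt p : ℝ) ≤ t := denPt_le_of_isLat_smul_emb (ht ▸ sub_pos.2 h)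
      (by simpa [hx'] using hx'l.sub hxl)
    have : x' - (denPt p : ℝ) • emb p = x + (t - denPt p) • emb p := by
      rw [hx', sub_smul, add_sub_assoc]
    simpa [this] using add_smul_emb_mem_cone hJ hpJ hx (sub_nonneg.2 hr)
  obtain rfl : y' = y := add_left_cancel (hxy'.trans hxy.symm)
  rfl

lemma exists_latt_cone_projAlong_eq (hJ : Convex ℝ J) (hp : IsRatPt p) (hpJ : p ∈ J)
    {x₀ : Fin (n + 1) → ℝ} (hx₀ : x₀ ∈ cone J) (hΛ : InLambda p (projAlong p x₀)) :
    ∃ x ∈ latt (cone J), projAlong p x = projAlong p x₀ := by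
  obtain ⟨z, c, hzc⟩ := hΛ
  obtain ⟨N, hN⟩ := exists_nat_ge (x₀ (Fin.last n) + c)
  have hr : (1 : ℝ) ≤ denPt p := by exact_mod_cast (denPt_pos_and_isLat hp).1
  set x := (fun i => ((Fin.snoc z (-c) : Fin (n + 1) → ℤ) i : ℝ)) +
    (N : ℝ) • ((denPt p : ℝ) • emb p)
  have hproj : projAlong p x = projAlong p x₀ := by
    rw [hzc, map_add, map_smul, map_smul, projAlong_emb_self]
    ext i
    simp [projAlong_apply]
  refine ⟨x, ⟨?_, (isLat_intCast _).add ((isLat_denPt_smul_emb hp).natCast_smul N)⟩, hproj⟩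
  rw [eq_add_smul_emb_of_projAlong_eq hproj.symm]
  refine add_smul_emb_mem_cone hJ hpJ hx₀ ?_
  simp only [x, Pi.add_apply, Pi.smul_apply, Fin.snoc_last, emb_last, smul_eq_mul, mul_one]
  push_cast
  nlinarith

lemma exists_mem_pairs_sub_notMem_cone (hJ : Convex ℝ J) (hK : Convex ℝ K) (hJc : IsCompact J)
    (hfree : IsAffineFreeSum J K p) (henv : pllenv p J = latt (plenv p J))
    (hm : m ∈ cone (convexHull ℝ (J ∪ K))) (hmlat : IsLat m) :
    ∃ q ∈ pairs J K m, q.1 - (denPt p : ℝ) • emb p ∉ cone J := by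
  obtain ⟨hp, hpJ, hpK, hIS, hsplit⟩ := hfree
  have hJK := disjoint_span_sub hpJ hpK hIS
  rw [cone_convexHull_union hJ hK ⟨p, hpJ⟩ ⟨p, hpK⟩] at hm
  obtain ⟨x₀, hx₀, y₀, hy₀, rfl⟩ := hm
  have hspan : projAlong p (x₀ + y₀) ∈ Submodule.span ℝ ((· - p) '' (J ∪ K)) := by
    rw [map_add, image_union, Submodule.span_union]
    exact Submodule.add_mem_sup (projAlong_mem_span hx₀) (projAlong_mem_span hy₀)
  obtain ⟨⟨u, w⟩, ⟨⟨hu, huΛ⟩, ⟨hw, -⟩, huw⟩, -⟩ := hsplit _ hspan hmlat.inLambda_projAlong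
  have hx₀u : projAlong p x₀ = u := eq_of_add_eq_add_of_disjoint hJK (projAlong_mem_span hx₀) hu
    (projAlong_mem_span hy₀) hw (by rw [← map_add, huw])
  obtain ⟨x₁, hx₁, hx₁x₀⟩ := exists_latt_cone_projAlong_eq hJ hp hpJ hx₀ (hx₀u ▸ huΛ)
  -- the lowest point of `cone J` on the line through `x₀` parallel to `α(p)`
  set x := epsP p J x₁
  have hx : x ∈ cone J := epsP_mem_cone hJc hx₁.1
  have hxlat : IsLat x := (henv ▸ ⟨x₁, hx₁, rfl⟩ : x ∈ latt (plenv p J)).2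
  have hx₀x : x₀ = x + (x₀ (Fin.last n) - x (Fin.last n)) • emb p :=
    eq_add_smul_emb_of_projAlong_eq (by rw [projAlong_epsP, hx₁x₀])
  have ht : 0 ≤ x₀ (Fin.last n) - x (Fin.last n) := by
    by_contra! h
    refine epsP_sub_smul_emb_notMem_cone (p := p) (J := J) (x := x₁) (neg_pos.2 h) ?_
    rwa [sub_eq_add_neg, ← neg_smul, neg_neg, ← hx₀x]
  have hy : x₀ + y₀ - x = y₀ + (x₀ (Fin.last n) - x (Fin.last n)) • emb p := by
    nth_rw 1 [hx₀x]
    abel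
  refine ⟨(x, x₀ + y₀ - x), ⟨⟨hx, hxlat⟩, ⟨?_, hmlat.sub hxlat⟩, add_sub_cancel _ _⟩, ?_⟩
  · rw [hy]
    exact add_smul_emb_mem_cone hK hpK hy₀ ht
  · exact epsP_sub_smul_emb_notMem_cone (by exact_mod_cast (denPt_pos_and_isLat hp).1)

lemma ncard_pairs_sdiff (hJ : Convex ℝ J) (hK : Convex ℝ K) (hJc : IsCompact J)
    (hfree : IsAffineFreeSum J K p) (henv : pllenv p J = latt (plenv p J)) (hmlat : IsLat m) :
    (pairs J K m \ {q | q.1 - (denPt p : ℝ) • emb p ∈ cone J}).ncard =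
      if m ∈ cone (convexHull ℝ (J ∪ K)) then 1 else 0 := by
  have ⟨hp, hpJ, hpK, hIS, _⟩ := hfree
  split_ifs with hm
  · obtain ⟨q, hq, hqr⟩ := exists_mem_pairs_sub_notMem_cone hJ hK hJc hfree henv hm hmlat
    rw [(subsingleton_pairs_sdiff hJ hpJ (disjoint_span_sub hpJ hpK hIS)).eq_singleton_of_mem
      ⟨hq, hqr⟩, ncard_singleton]
  · suffices pairs J K m = ∅ by rw [this, empty_sdiff, ncard_empty]
    refine eq_empty_of_forall_notMem fun q ⟨⟨hx, _⟩, ⟨hy, _⟩, hxy⟩ => hm ?_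
    rw [cone_convexHull_union hJ hK ⟨p, hpJ⟩ ⟨p, hpK⟩, ← hxy]
    exact add_mem_add hx hy

end Pairs

theorem multivariate_braun_affine_general {n : ℕ} (J K : Set (Fin n → ℝ))
    (p : Fin n → ℝ) (hJconv : Convex ℝ J) (hKconv : Convex ℝ K) (hJcpt : IsCompact J)
    (hfree : IsAffineFreeSum J K p) (henv : pllenv p J = latt (plenv p J)) :
    ∀ v : Fin (n + 1) → ℤ, ((fun i => (v i : ℝ)) = (denPt p : ℝ) • emb p) →
      ∀ m : Fin (n + 1) → ℤ,
        (Npairs J K m : ℤ) - (Npairs J K (m - v) : ℤ) =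
          if (fun i => (m i : ℝ)) ∈ cone (convexHull ℝ (J ∪ K)) then 1 else 0 := by
  intro v hv m
  have ⟨hp, hpJ, hpK, hIS, _⟩ := hfree
  have hmv : (fun i => ((m - v) i : ℝ)) = (fun i => (m i : ℝ)) - (denPt p : ℝ) • emb p := by
    rw [← hv]
    ext i
    simp
  rw [Npairs_eq_ncard_pairs, Npairs_eq_ncard_pairs, hmv,
    ncard_pairs_sub_smul_emb hJconv hpJ (Nat.cast_nonneg _) (isLat_denPt_smul_emb hp),
    ← ncard_inter_add_ncard_sdiff_eq_ncard _ _ (pairs_finite (disjoint_span_sub hpJ hpK hIS)),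
    ncard_pairs_sdiff hJconv hKconv hJcpt hfree henv (isLat_intCast m)]
  split_ifs <;> simp

/-- Theorem 5.6 (multivariate Braun formula for affine free sums). -/
theorem multivariate_braun_affine {n : ℕ} (hn : 1 ≤ n) (J K : Set (Fin n → ℝ))
    (p : Fin n → ℝ) (hJconv : Convex ℝ J) (hKconv : Convex ℝ K) (hJcpt : IsCompact J)
    (hfree : IsAffineFreeSum J K p) (henv : pllenv p J = latt (plenv p J)) :
    ∀ v : Fin (n + 1) → ℤ, ((fun i => (v i : ℝ)) = (denPt p : ℝ) • emb p) →
      ∀ m : Fin (n + 1) → ℤ,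
        (Npairs J K m : ℤ) - (Npairs J K (m - v) : ℤ) =
          if (fun i => (m i : ℝ)) ∈ cone (convexHull ℝ (J ∪ K)) then 1 else 0 :=
  multivariate_braun_affine_general J K p hJconv hKconv hJcpt hfree henv

end ArxivFreeSum
end
end

section
/- Let P ⊂ ℝ^n be a rational polytope with 0 ∈ P and let d := den(P^∨). Then llenv(cone P) is the union, over integers 0 ≤ i ≤ d − 1, of the sets { x − (i/d)e_{n+1} : x ∈ (lenv(cone P) + (i/d)e_{n+1}) ∩ ℤ^{n+1} }, and this union is disjoint. -/
/-!
A point of `cone P` over `m ∈ ℝⁿ` has heights `s ≥ 0` with `m ∈ s • P`, so the lower envelope is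
`(m, μ m)` with `μ m` the infimum of these heights. For a polytope `P ∋ 0`, `μ m` is the maximum
of `φ m` over the polar `P^∨`, attained at a vertex: Hahn–Banach gives `φ ∈ P^∨` with `φ m`
arbitrarily close to `μ m`, and a simplex-method pivot (moving `φ` along a direction vanishing on
its active vertices) reaches a vertex of `P^∨` without decreasing `φ m`; there are finitely many
vertices. Hence `d • μ m ∈ ℤ` for lattice points `m`, where `d = den(P^∨)`, and exactly one
`0 ≤ i < d` makes `μ m + i / d` an integer. The denominator `d` exists because a vertex of `P^∨`
equals `1` on rational vertices of `P` spanning `lin P`, so it is rational on `lin P ∩ ℚⁿ`, and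
`lin P ∩ ℤⁿ` is finitely generated.
-/

open Set Pointwise
open scoped Classical

noncomputable section

namespace ArxivFreeSum

variable {n : ℕ}

def heights (K : Set (Fin n → ℝ)) (m : Fin n → ℝ) : Set ℝ := {s | 0 ≤ s ∧ m ∈ s • K}

lemma heights_bddBelow (K : Set (Fin n → ℝ)) (m : Fin n → ℝ) : BddBelow (heights K m) :=
  ⟨0, fun _ hs => hs.1⟩

lemma mem_heights_of_le {K : Set (Fin n → ℝ)} (hK : Convex ℝ K) (h0 : (0 : Fin n → ℝ) ∈ K)
    {m : Fin n → ℝ} {s t : ℝ} (hs : s ∈ heights K m) (hst : s ≤ t) : t ∈ heights K m := by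
  obtain ⟨hs0, p, hp, rfl⟩ := hs
  refine ⟨hs0.trans hst, ?_⟩
  rcases hs0.eq_or_lt with rfl | hs0
  · simpa using Set.zero_mem_smul_set h0
  · have hp' := hK.mem_smul_of_zero_mem h0 hp ((one_le_div hs0).2 hst)
    have := Set.smul_mem_smul_set (a := s) hp'
    rwa [smul_smul, mul_div_cancel₀ _ hs0.ne'] at this

lemma smul_emb (l : ℝ) (a : Fin n → ℝ) : l • emb a = Fin.snoc (l • a) l := by
  ext j
  refine Fin.lastCases ?_ (fun i => ?_) j <;> simp [emb]

lemma snoc_add_smul_eLast (m : Fin n → ℝ) (s c : ℝ) :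
    (Fin.snoc m s : Fin (n + 1) → ℝ) + c • eLast n = Fin.snoc m (s + c) := by
  ext j
  refine Fin.lastCases ?_ (fun i => ?_) j <;> simp [eLast]

lemma snoc_mem_cone_iff {K : Set (Fin n → ℝ)} {m : Fin n → ℝ} {s : ℝ} :
    (Fin.snoc m s : Fin (n + 1) → ℝ) ∈ cone K ↔ s ∈ heights K m := by
  simp only [cone, smul_emb, Set.mem_ofPred_eq, Fin.snoc_inj, heights]
  constructor
  · rintro ⟨l, a, ha, hl, rfl, rfl⟩
    exact ⟨hl, a, ha, rfl⟩
  · rintro ⟨hs, a, ha, rfl⟩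
    exact ⟨s, a, ha, hs, rfl, rfl⟩

lemma isLat_snoc_iff {m : Fin n → ℝ} {s : ℝ} :
    IsLat (Fin.snoc m s : Fin (n + 1) → ℝ) ↔ IsLat m ∧ ∃ z : ℤ, s = z := by
  simp [IsLat, Fin.forall_fin_succ']

lemma eps_snoc {K : Set (Fin n → ℝ)} {m : Fin n → ℝ} {s : ℝ} (hs : s ∈ heights K m) :
    eps K (Fin.snoc m s) = Fin.snoc m (sInf (heights K m)) := by
  have hset : {l : ℝ | (Fin.snoc m s : Fin (n + 1) → ℝ) - l • eLast n ∈ cone K} =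
      (s - ·) '' heights K m := by
    ext l
    simp only [Set.mem_ofPred_eq, sub_eq_add_neg, ← neg_smul, snoc_add_smul_eLast,
      snoc_mem_cone_iff, Set.mem_image]
    exact ⟨fun h => ⟨s + -l, h, by ring⟩, by rintro ⟨r, hr, rfl⟩; simpa using hr⟩
  have hsup : sSup ((s - ·) '' heights K m) = s - sInf (heights K m) :=
    (Antitone.map_csInf_of_continuousAt (continuous_sub_left s).continuousAt
      (fun _ _ h => sub_le_sub_left h s) ⟨s, hs⟩ (heights_bddBelow K m)).symm
  rw [eps, hset, hsup, sub_eq_add_neg, ← neg_smul, snoc_add_smul_eLast]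
  congr 1
  ring

lemma mem_lenv_iff {K : Set (Fin n → ℝ)} {y : Fin (n + 1) → ℝ} :
    y ∈ lenv K ↔ ∃ m, (heights K m).Nonempty ∧ y = Fin.snoc m (sInf (heights K m)) := by
  constructor
  · rintro ⟨x, hx, rfl⟩
    rw [← Fin.snoc_init_self x, snoc_mem_cone_iff] at hx
    exact ⟨Fin.init x, ⟨_, hx⟩, by rw [← eps_snoc hx, Fin.snoc_init_self]⟩
  · rintro ⟨m, ⟨s, hs⟩, rfl⟩
    exact ⟨_, snoc_mem_cone_iff.2 hs, eps_snoc hs⟩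

lemma mem_llenv_iff {K : Set (Fin n → ℝ)} (hK : Convex ℝ K) (h0 : (0 : Fin n → ℝ) ∈ K)
    {y : Fin (n + 1) → ℝ} :
    y ∈ llenv K ↔
      ∃ m, IsLat m ∧ (heights K m).Nonempty ∧ y = Fin.snoc m (sInf (heights K m)) := by
  constructor
  · rintro ⟨x, ⟨hx, hxlat⟩, rfl⟩
    rw [← Fin.snoc_init_self x, snoc_mem_cone_iff] at hx
    rw [← Fin.snoc_init_self x, isLat_snoc_iff] at hxlat
    exact ⟨Fin.init x, hxlat.1, ⟨_, hx⟩, by rw [← eps_snoc hx, Fin.snoc_init_self]⟩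
  · rintro ⟨m, hm, ⟨s, hs⟩, rfl⟩
    have hN : (⌈s⌉ : ℝ) ∈ heights K m := mem_heights_of_le hK h0 hs (Int.le_ceil s)
    exact ⟨_, ⟨snoc_mem_cone_iff.2 hN, isLat_snoc_iff.2 ⟨hm, _, rfl⟩⟩, eps_snoc hN⟩

lemma mem_shifted_latt_lenv_iff {K : Set (Fin n → ℝ)} {c : ℝ} {y : Fin (n + 1) → ℝ} :
    y ∈ (fun x => x - c • eLast n) '' latt ((fun x => x + c • eLast n) '' lenv K) ↔
      ∃ m, IsLat m ∧ (heights K m).Nonempty ∧ (∃ k : ℤ, sInf (heights K m) + c = k) ∧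
        y = Fin.snoc m (sInf (heights K m)) := by
  constructor
  · rintro ⟨_, ⟨⟨w, hw, rfl⟩, hlat⟩, rfl⟩
    obtain ⟨m, hne, rfl⟩ := mem_lenv_iff.1 hw
    dsimp only at hlat
    rw [snoc_add_smul_eLast, isLat_snoc_iff] at hlat
    exact ⟨m, hlat.1, hne, hlat.2, by simp⟩
  · rintro ⟨m, hm, hne, hk, rfl⟩
    refine ⟨_, ⟨⟨_, mem_lenv_iff.2 ⟨m, hne, rfl⟩, rfl⟩, ?_⟩, add_sub_cancel_right _ _⟩
    dsimp only
    rw [snoc_add_smul_eLast, isLat_snoc_iff]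
    exact ⟨hm, hk⟩

section Polar

variable {F : Type*} [AddCommGroup F] [Module ℝ F] {S : Set F} {s : ℝ} {x : F}

/-- One-sided, unlike `LinearMap.polar`: `φ ≤ 1` rather than `|φ| ≤ 1` on `S`. -/
def polarSet (S : Set F) : Set (Module.Dual ℝ F) := {φ | ∀ a ∈ S, φ a ≤ 1}

def activeSet (S : Set F) (φ : Module.Dual ℝ F) : Set F := {a | a ∈ S ∧ φ a = 1}

lemma activeSet_subset (S : Set F) (φ : Module.Dual ℝ F) : activeSet S φ ⊆ S := fun _ ha => ha.1

lemma apply_le_of_forall_le {φ : Module.Dual ℝ F} {c : ℝ} (hφ : ∀ a ∈ S, φ a ≤ c)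
    (hs : 0 ≤ s) (hx : x ∈ s • convexHull ℝ S) : φ x ≤ s * c := by
  obtain ⟨p, hp, rfl⟩ := hx
  rw [map_smul, smul_eq_mul]
  exact mul_le_mul_of_nonneg_left (convexHull_min hφ (convex_halfSpace_le φ.isLinear c) hp) hs

lemma mem_extremePoints_polarSet {φ : Module.Dual ℝ F} (hφ : φ ∈ polarSet S)
    (hspan : Submodule.span ℝ (activeSet S φ) = ⊤) : φ ∈ (polarSet S).extremePoints ℝ := by
  refine ⟨hφ, fun φ₁ hφ₁ φ₂ hφ₂ ⟨a, b, ha, hb, hab, hφab⟩ => ?_⟩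
  refine LinearMap.ext_on hspan fun x ⟨hxS, hx1⟩ => ?_
  have hcomb : a * φ₁ x + b * φ₂ x = 1 := by
    rw [← hx1, ← hφab]; rfl
  have := hφ₁ x hxS
  have := hφ₂ x hxS
  show φ₁ x = φ x
  nlinarith

open Filter Topology in
lemma span_activeSet_eq_top {φ : Module.Dual ℝ F} (hS : S.Finite)
    (hφ : φ ∈ (polarSet S).extremePoints ℝ) : Submodule.span ℝ (activeSet S φ) = ⊤ := by
  by_contra hne
  obtain ⟨ψ, hψ, hψact⟩ :=
    Submodule.exists_dual_map_eq_bot_of_lt_top (lt_top_iff_ne_top.2 hne) inferInstance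
  have hψ0 : ∀ a ∈ activeSet S φ, ψ a = 0 := fun a ha =>
    LinearMap.le_ker_iff_map.2 hψact (Submodule.subset_span ha)
  have hsmall : ∀ a ∈ S, ∀ᶠ ε in 𝓝 (0 : ℝ), ε * |ψ a| ≤ 1 - φ a := by
    intro a ha
    rcases (hφ.1 a ha).lt_or_eq with hlt | heq
    · have : Tendsto (fun ε : ℝ => ε * |ψ a|) (𝓝 0) (𝓝 0) := by
        simpa using (tendsto_id (x := 𝓝 (0 : ℝ))).mul_const |ψ a|
      exact this.eventually (eventually_le_nhds (by linarith))
    · simp [hψ0 a ⟨ha, heq⟩, heq]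
  obtain ⟨ε, hεS, hε⟩ :=
    (((hS.eventually_all.2 hsmall).filter_mono nhdsWithin_le_nhds).and
      (self_mem_nhdsWithin (s := Set.Ioi (0 : ℝ)))).exists
  have hmem : ∀ c : ℝ, |c| ≤ ε → φ + c • ψ ∈ polarSet S := by
    intro c hc a ha
    have : c * ψ a ≤ ε * |ψ a| :=
      calc c * ψ a ≤ |c| * |ψ a| := (le_abs_self _).trans (abs_mul c (ψ a)).le
        _ ≤ ε * |ψ a| := mul_le_mul_of_nonneg_right hc (abs_nonneg _)
    simp only [LinearMap.add_apply, LinearMap.smul_apply, smul_eq_mul]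
    linarith [hεS a ha]
  have hseg : φ ∈ openSegment ℝ (φ + (-ε) • ψ) (φ + ε • ψ) :=
    ⟨1 / 2, 1 / 2, by norm_num, by norm_num, by norm_num, by module⟩
  have := hφ.2 (hmem (-ε) (by simp [abs_of_pos hε])) (hmem ε (by simp [abs_of_pos hε])) hseg
  exact hψ (by simpa [hε.ne'] using this)

lemma finite_extremePoints_polarSet (hS : S.Finite) : ((polarSet S).extremePoints ℝ).Finite := by
  refine Set.Finite.of_finite_image (f := activeSet S) ?_ fun φ₁ h₁ φ₂ _ h => ?_
  · exact hS.finite_subsets.subset (Set.image_subset_iff.2 fun φ _ => activeSet_subset S φ)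
  · exact LinearMap.ext_on (span_activeSet_eq_top hS h₁) fun a ha =>
      ha.2.trans (h ▸ ha : a ∈ activeSet S φ₂).2.symm

lemma exists_ascent_direction (hSspan : Submodule.span ℝ S = ⊤) (hs : 0 ≤ s)
    (hx : x ∈ s • convexHull ℝ S) {T : Set F} (hT : Submodule.span ℝ T ≠ ⊤) :
    ∃ ψ : Module.Dual ℝ F, (∀ a ∈ T, ψ a = 0) ∧ 0 ≤ ψ x ∧ ∃ a ∈ S, 0 < ψ a := by
  obtain ⟨ψ₀, hψ₀, hψ₀T⟩ :=
    Submodule.exists_dual_map_eq_bot_of_lt_top (lt_top_iff_ne_top.2 hT) inferInstance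
  have hT0 : ∀ σ ∈ ({ψ₀, -ψ₀} : Set (Module.Dual ℝ F)), ∀ a ∈ T, σ a = 0 := by
    intro σ hσ a ha
    have h0 : ψ₀ a = 0 := LinearMap.le_ker_iff_map.2 hψ₀T (Submodule.subset_span ha)
    rcases hσ with rfl | rfl <;> simp [h0]
  obtain ⟨σ, hσ, hσx⟩ : ∃ σ ∈ ({ψ₀, -ψ₀} : Set (Module.Dual ℝ F)), 0 ≤ σ x := by
    rcases le_total 0 (ψ₀ x) with h | h
    · exact ⟨ψ₀, by simp, h⟩
    · exact ⟨-ψ₀, by simp, by simpa using h⟩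
  by_cases hpos : ∃ a ∈ S, 0 < σ a
  · exact ⟨σ, hT0 σ hσ, hσx, hpos⟩
  push Not at hpos
  have hσ0 : σ x = 0 := le_antisymm (by simpa using apply_le_of_forall_le hpos hs hx) hσx
  have hσne : σ ≠ 0 := by rcases hσ with rfl | rfl <;> simpa using hψ₀
  obtain ⟨a, ha, hσa⟩ : ∃ a ∈ S, σ a ≠ 0 := by
    by_contra! h
    exact hσne (LinearMap.ext_on hSspan fun a ha => h a ha)
  refine ⟨-σ, fun a ha => by simp [hT0 σ hσ a ha], by simp [hσ0], a, ha, ?_⟩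
  simpa using (hpos a ha).lt_of_ne hσa

lemma exists_pivot_polarSet (hS : S.Finite) (hSspan : Submodule.span ℝ S = ⊤) (hs : 0 ≤ s)
    (hx : x ∈ s • convexHull ℝ S) {φ : Module.Dual ℝ F} (hφ : φ ∈ polarSet S)
    (hact : Submodule.span ℝ (activeSet S φ) ≠ ⊤) :
    ∃ φ' ∈ polarSet S, φ x ≤ φ' x ∧ S \ activeSet S φ' ⊂ S \ activeSet S φ := by
  obtain ⟨ψ, hψact, hψx, hpos⟩ := exists_ascent_direction hSspan hs hx hact
  obtain ⟨b, ⟨hbS, hψb⟩, hbmin⟩ := Set.exists_min_image {a ∈ S | 0 < ψ a}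
    (fun a => (1 - φ a) / ψ a) (hS.subset fun _ ha => ha.1) hpos
  set t := (1 - φ b) / ψ b
  have ht : 0 ≤ t := div_nonneg (by linarith [hφ b hbS]) hψb.le
  have hval : ∀ a, (φ + t • ψ) a = φ a + t * ψ a := fun a => rfl
  refine ⟨φ + t • ψ, fun a ha => ?_, ?_, ?_⟩
  · rcases le_or_gt (ψ a) 0 with h | h
    · nlinarith [hφ a ha, hval a]
    · have := hbmin a ⟨ha, h⟩
      rw [le_div_iff₀ h] at this
      linarith [hval a]
  · nlinarith [hval x]
  · have hsub : activeSet S φ ⊆ activeSet S (φ + t • ψ) := fun a ha =>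
      ⟨ha.1, by rw [hval, hψact a ha, mul_zero, add_zero, ha.2]⟩
    have hb : b ∈ activeSet S (φ + t • ψ) := ⟨hbS, by rw [hval, div_mul_cancel₀ _ hψb.ne']; ring⟩
    refine Set.ssubset_iff_subset_ne.2 ⟨Set.sdiff_subset_sdiff_right hsub, fun h => ?_⟩
    have hb' : b ∉ activeSet S φ := fun hb' => hψb.ne' (hψact b hb')
    exact ((Set.ext_iff.1 h b).2 ⟨hbS, hb'⟩).2 hb

lemma exists_mem_extremePoints_polarSet_apply_le (hS : S.Finite)
    (hSspan : Submodule.span ℝ S = ⊤) (hs : 0 ≤ s) (hx : x ∈ s • convexHull ℝ S)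
    {φ : Module.Dual ℝ F} (hφ : φ ∈ polarSet S) :
    ∃ ψ ∈ (polarSet S).extremePoints ℝ, φ x ≤ ψ x := by
  induction hk : (S \ activeSet S φ).ncard using Nat.strong_induction_on generalizing φ with
  | _ k ih =>
    by_cases hact : Submodule.span ℝ (activeSet S φ) = ⊤
    · exact ⟨φ, mem_extremePoints_polarSet hφ hact, le_rfl⟩
    obtain ⟨φ', hφ', hle, hlt⟩ := exists_pivot_polarSet hS hSspan hs hx hφ hact
    obtain ⟨ψ, hψ, hψle⟩ := ih _ (hk ▸ Set.ncard_lt_ncard hlt hS.sdiff) hφ' rfl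
    exact ⟨ψ, hψ, hle.trans hψle⟩

lemma exists_mem_extremePoints_polarSet_forall_apply_le (hS : S.Finite)
    (hSspan : Submodule.span ℝ S = ⊤) (hs : 0 ≤ s) (hx : x ∈ s • convexHull ℝ S) :
    ∃ ψ ∈ (polarSet S).extremePoints ℝ, ∀ φ ∈ polarSet S, φ x ≤ ψ x := by
  obtain ⟨ψ₀, hψ₀, -⟩ := exists_mem_extremePoints_polarSet_apply_le hS hSspan hs hx
    (φ := 0) fun _ _ => by simp
  obtain ⟨ψ, hψ, hmax⟩ := Set.exists_max_image _ (fun ψ : Module.Dual ℝ F => ψ x)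
    (finite_extremePoints_polarSet hS) ⟨ψ₀, hψ₀⟩
  refine ⟨ψ, hψ, fun φ hφ => ?_⟩
  obtain ⟨ψ', hψ', hle⟩ := exists_mem_extremePoints_polarSet_apply_le hS hSspan hs hx hφ
  exact hle.trans (hmax ψ' hψ')

end Polar

section Subspace

variable {E : Type*} [AddCommGroup E] [Module ℝ E]

lemma preimage_val_smul_convexHull {U : Submodule ℝ E} {V : Set E} (hV : V ⊆ U) (s : ℝ) :
    (Subtype.val ⁻¹' (s • convexHull ℝ V) : Set U) = s • convexHull ℝ (Subtype.val ⁻¹' V) := by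
  have hVU : V = U.subtype '' (Subtype.val ⁻¹' V) :=
    (Set.image_preimage_eq_of_subset (by rwa [Submodule.coe_subtype, Subtype.range_coe])).symm
  conv_lhs => rw [hVU, ← LinearMap.image_convexHull, ← image_smul_set]
  exact Set.preimage_image_eq _ Subtype.val_injective

lemma preimage_val_convexHull {U : Submodule ℝ E} {V : Set E} (hV : V ⊆ U) :
    (Subtype.val ⁻¹' convexHull ℝ V : Set U) = convexHull ℝ (Subtype.val ⁻¹' V) := by
  simpa using preimage_val_smul_convexHull hV 1

lemma subset_span_convexHull (V : Set E) : V ⊆ Submodule.span ℝ (convexHull ℝ V) :=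
  (subset_convexHull ℝ V).trans Submodule.subset_span

lemma span_preimage_val_eq_top (V : Set E) :
    Submodule.span ℝ (Subtype.val ⁻¹' V : Set (Submodule.span ℝ (convexHull ℝ V))) = ⊤ := by
  rw [eq_top_iff, ← Submodule.span_span_coe_preimage,
    preimage_val_convexHull (subset_span_convexHull V)]
  exact Submodule.span_le.2 (convexHull_min Submodule.subset_span (Submodule.convex _))

end Subspace

lemma dualSet_convexHull (V : Set (Fin n → ℝ)) :
    dualSet (convexHull ℝ V) =
      polarSet (Subtype.val ⁻¹' V : Set (Submodule.span ℝ (convexHull ℝ V))) := by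
  ext φ
  refine ⟨fun hφ a ha => hφ a (subset_convexHull ℝ V ha), fun hφ a ha => ?_⟩
  rw [← Set.mem_preimage, preimage_val_convexHull (subset_span_convexHull V)] at ha
  exact convexHull_min hφ (convex_halfSpace_le φ.isLinear 1) ha

lemma exists_mem_extremePoints_dualSet_forall_apply_le {V : Set (Fin n → ℝ)} (hV : V.Finite)
    {s : ℝ} (hs : 0 ≤ s) {a : Submodule.span ℝ (convexHull ℝ V)}
    (ha : (a : Fin n → ℝ) ∈ s • convexHull ℝ V) :
    ∃ ψ ∈ (dualSet (convexHull ℝ V)).extremePoints ℝ,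
      ∀ φ ∈ dualSet (convexHull ℝ V), φ a ≤ ψ a := by
  rw [dualSet_convexHull]
  refine exists_mem_extremePoints_polarSet_forall_apply_le
    (hV.preimage Subtype.val_injective.injOn) (span_preimage_val_eq_top V) hs ?_
  rwa [← preimage_val_smul_convexHull (subset_span_convexHull V)]

lemma apply_le_of_mem_dualSet_convexHull {V : Set (Fin n → ℝ)}
    {φ : Module.Dual ℝ (Submodule.span ℝ (convexHull ℝ V))} (hφ : φ ∈ dualSet (convexHull ℝ V))
    {s : ℝ} (hs : 0 ≤ s) {a : Submodule.span ℝ (convexHull ℝ V)}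
    (ha : (a : Fin n → ℝ) ∈ s • convexHull ℝ V) : φ a ≤ s := by
  rw [dualSet_convexHull] at hφ
  rw [← Set.mem_preimage, preimage_val_smul_convexHull (subset_span_convexHull V)] at ha
  simpa using apply_le_of_forall_le hφ hs ha

lemma exists_mem_dualSet_lt_apply {P : Set (Fin n → ℝ)} (hconv : Convex ℝ P)
    (hclosed : IsClosed P) (h0 : (0 : Fin n → ℝ) ∈ P) {a : Submodule.span ℝ P} {t : ℝ}
    (ht : 0 < t) (ha : (a : Fin n → ℝ) ∉ t • P) : ∃ φ ∈ dualSet P, t < φ a := by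
  rw [mem_smul_set_iff_inv_smul_mem₀ ht.ne'] at ha
  obtain ⟨f, u, hfP, hfa⟩ := geometric_hahn_banach_closed_point hconv hclosed ha
  have hu : 0 < u := by simpa using hfP 0 h0
  set φ := u⁻¹ • (f : (Fin n → ℝ) →ₗ[ℝ] ℝ).comp (Submodule.span ℝ P).subtype
  have hφ : ∀ b, φ b = u⁻¹ * f b := fun _ => rfl
  refine ⟨φ, fun b hb => ?_, ?_⟩
  · rw [hφ, inv_mul_le_iff₀ hu, mul_one]
    exact (hfP b hb).le
  · rw [map_smul, smul_eq_mul, lt_inv_mul_iff₀ ht] at hfa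
    rw [hφ, lt_inv_mul_iff₀ hu]
    linarith

lemma isRatPt_iff_mem_range {y : Fin n → ℝ} :
    IsRatPt y ↔ y ∈ Set.range ((Algebra.linearMap ℚ ℝ).compLeft (Fin n)) := by
  refine ⟨fun hy => ?_, by rintro ⟨x, rfl⟩ i; exact ⟨x i, rfl⟩⟩
  choose x hx using hy
  exact ⟨x, funext fun i => (hx i).symm⟩

lemma mem_span_rat_of_mem_span_real {R : Set (Fin n → ℚ)} {x : Fin n → ℚ}
    (h : (Algebra.linearMap ℚ ℝ).compLeft (Fin n) x ∈
      Submodule.span ℝ ((Algebra.linearMap ℚ ℝ).compLeft (Fin n) '' R)) :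
    x ∈ Submodule.span ℚ R := by
  by_contra hx
  obtain ⟨f, hfx, hfR⟩ := Submodule.exists_dual_map_eq_bot_of_notMem hx inferInstance
  -- `f` separates `x` from `span ℚ R`; the real functional with the same coefficients
  -- separates it from `span ℝ R`
  let G : (Fin n → ℝ) →ₗ[ℝ] ℝ :=
    ∑ i, (f (fun j => if i = j then 1 else 0) : ℝ) • LinearMap.proj i
  have hG : ∀ y, G ((Algebra.linearMap ℚ ℝ).compLeft (Fin n) y) = f y := fun y => by
    rw [LinearMap.pi_apply_eq_sum_univ f y]
    simp [G, mul_comm]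
  have hGR : Submodule.span ℝ ((Algebra.linearMap ℚ ℝ).compLeft (Fin n) '' R) ≤
      LinearMap.ker G := by
    rw [Submodule.span_le]
    rintro _ ⟨r, hr, rfl⟩
    simpa [hG] using LinearMap.le_ker_iff_map.2 hfR (Submodule.subset_span hr)
  exact hfx (by exact_mod_cast (hG x).symm.trans (hGR h))

lemma exists_ratCast_of_mem_span {A : Set (Fin n → ℝ)} (hA : ∀ v ∈ A, IsRatPt v)
    {G : (Fin n → ℝ) →ₗ[ℝ] ℝ} (hG : ∀ v ∈ A, G v = 1) {y : Fin n → ℝ}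
    (hy : y ∈ Submodule.span ℝ A) (hyrat : IsRatPt y) : ∃ q : ℚ, G y = q := by
  set ι := (Algebra.linearMap ℚ ℝ).compLeft (Fin n)
  obtain ⟨x, rfl⟩ := isRatPt_iff_mem_range.1 hyrat
  have hA' : ι '' (ι ⁻¹' A) = A :=
    Set.image_preimage_eq_of_subset fun v hv => isRatPt_iff_mem_range.1 (hA v hv)
  have hx := mem_span_rat_of_mem_span_real (R := ι ⁻¹' A) (hA'.symm ▸ hy)
  have h1 : ((G.restrictScalars ℚ).comp ι) '' (ι ⁻¹' A) ⊆ {1} := by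
    rintro _ ⟨v, hv, rfl⟩
    exact hG _ hv
  obtain ⟨q, hq⟩ := Submodule.mem_span_singleton.1
    (Submodule.span_mono h1 (Submodule.apply_mem_span_image_of_mem_span _ hx))
  exact ⟨q, by simpa [Rat.smul_one_eq_cast] using hq.symm⟩

lemma exists_extend_ratValued_of_mem_extremePoints {V : Set (Fin n → ℝ)} (hV : V.Finite)
    (hVrat : ∀ v ∈ V, IsRatPt v) {φ : Module.Dual ℝ (Submodule.span ℝ (convexHull ℝ V))}
    (hφ : φ ∈ (dualSet (convexHull ℝ V)).extremePoints ℝ) :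
    ∃ G : (Fin n → ℝ) →ₗ[ℝ] ℝ, G.comp (Submodule.span ℝ (convexHull ℝ V)).subtype = φ ∧
      ∀ y ∈ Submodule.span ℝ (convexHull ℝ V), IsRatPt y → ∃ q : ℚ, G y = q := by
  rw [dualSet_convexHull] at hφ
  have hact := span_activeSet_eq_top (hV.preimage Subtype.val_injective.injOn) hφ
  obtain ⟨G, hG⟩ := LinearMap.exists_extend φ
  refine ⟨G, hG, fun y hy hyrat => exists_ratCast_of_mem_span
    (A := Subtype.val '' activeSet (Subtype.val ⁻¹' V) φ) ?_ ?_ ?_ hyrat⟩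
  · rintro _ ⟨a, ha, rfl⟩
    exact hVrat _ ha.1
  · rintro _ ⟨a, ha, rfl⟩
    rw [← ha.2, ← hG]
    rfl
  · have h := Submodule.span_image (s := activeSet (Subtype.val ⁻¹' V) φ)
      (Submodule.span ℝ (convexHull ℝ V)).subtype
    rw [hact, Submodule.map_subtype_top] at h
    rwa [← h] at hy

lemma exists_pos_mul_eq_intCast_of_fg {M : Type*} [AddCommGroup M] {L : Submodule ℤ M}
    (hL : L.FG) (f : M →ₗ[ℤ] ℝ) (hf : ∀ x ∈ L, ∃ q : ℚ, f x = q) :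
    ∃ d : ℕ, 0 < d ∧ ∀ x ∈ L, ∃ z : ℤ, d * f x = z := by
  obtain ⟨T, rfl⟩ := hL
  choose! q hq using fun x (hx : x ∈ T) => hf x (Submodule.subset_span hx)
  refine ⟨∏ x ∈ T, (q x).den, Finset.prod_pos fun x _ => (q x).pos, fun x hx => ?_⟩
  induction hx using Submodule.span_induction with
  | mem x hx =>
    obtain ⟨k, hk⟩ := Finset.dvd_prod_of_mem (fun x => (q x).den) hx
    have hnum := congrArg (Rat.cast : ℚ → ℝ) (Rat.mul_den_eq_num (q x))
    push_cast at hnum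
    refine ⟨k * (q x).num, ?_⟩
    rw [hq x hx, hk]
    push_cast
    linear_combination (k : ℝ) * hnum
  | zero => exact ⟨0, by simp⟩
  | add x y _ _ hx hy =>
    obtain ⟨a, ha⟩ := hx
    obtain ⟨b, hb⟩ := hy
    exact ⟨a + b, by rw [map_add, mul_add, ha, hb]; push_cast; ring⟩
  | smul c x _ hx =>
    obtain ⟨a, ha⟩ := hx
    exact ⟨c * a, by rw [map_zsmul, zsmul_eq_mul, mul_left_comm, ha]; push_cast; ring⟩

lemma exists_pos_mul_eq_intCast_of_mem_extremePoints {V : Set (Fin n → ℝ)} (hV : V.Finite)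
    (hVrat : ∀ v ∈ V, IsRatPt v) {φ : Module.Dual ℝ (Submodule.span ℝ (convexHull ℝ V))}
    (hφ : φ ∈ (dualSet (convexHull ℝ V)).extremePoints ℝ) :
    ∃ d : ℕ, 0 < d ∧ ∀ a : Submodule.span ℝ (convexHull ℝ V), IsLat (a : Fin n → ℝ) →
      ∃ z : ℤ, d * φ a = z := by
  set U := Submodule.span ℝ (convexHull ℝ V)
  set ι := (Algebra.linearMap ℤ ℝ).compLeft (Fin n)
  obtain ⟨G, hG, hGrat⟩ := exists_extend_ratValued_of_mem_extremePoints hV hVrat hφ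
  obtain ⟨d, hd, hdL⟩ := exists_pos_mul_eq_intCast_of_fg
    (IsNoetherian.noetherian (Submodule.comap ι (U.restrictScalars ℤ)))
    ((G.restrictScalars ℤ).comp ι) fun x hx => hGrat _ hx (fun i => ⟨x i, by simp [ι]⟩)
  refine ⟨d, hd, fun a ha => ?_⟩
  choose x hx using ha
  have hxa : ι x = a := funext fun i => (hx i).symm
  obtain ⟨z, hz⟩ := hdL x (by simp [hxa])
  exact ⟨z, by rw [← hG]; simpa [hxa] using hz⟩

lemma dualDen_spec {V : Set (Fin n → ℝ)} (hV : V.Finite) (hVrat : ∀ v ∈ V, IsRatPt v) :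
    0 < dualDen (convexHull ℝ V) ∧ ∀ φ ∈ (dualSet (convexHull ℝ V)).extremePoints ℝ,
      IsDualLatticePt (convexHull ℝ V) ((dualDen (convexHull ℝ V) : ℝ) • φ) := by
  have hfin : ((dualSet (convexHull ℝ V)).extremePoints ℝ).Finite := by
    rw [dualSet_convexHull]
    exact finite_extremePoints_polarSet (hV.preimage Subtype.val_injective.injOn)
  choose! d hdpos hd using fun φ (hφ : φ ∈ (dualSet (convexHull ℝ V)).extremePoints ℝ) =>
    exists_pos_mul_eq_intCast_of_mem_extremePoints hV hVrat hφ
  have hne : {d : ℕ | 0 < d ∧ ∀ φ ∈ (dualSet (convexHull ℝ V)).extremePoints ℝ,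
      IsDualLatticePt (convexHull ℝ V) ((d : ℝ) • φ)}.Nonempty := by
    refine ⟨∏ φ ∈ hfin.toFinset, d φ,
      Finset.prod_pos fun φ hφ => hdpos φ (hfin.mem_toFinset.1 hφ), fun φ hφ a ha => ?_⟩
    obtain ⟨k, hk⟩ := Finset.dvd_prod_of_mem d (hfin.mem_toFinset.2 hφ)
    obtain ⟨z, hz⟩ := hd φ hφ a ha
    refine ⟨k * z, ?_⟩
    rw [LinearMap.smul_apply, smul_eq_mul, hk]
    push_cast
    rw [← hz]
    ring
  exact Nat.sInf_mem hne

lemma exists_mem_extremePoints_dualSet_apply_eq_sInf_heights {V : Set (Fin n → ℝ)}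
    (hV : V.Finite) (h0 : (0 : Fin n → ℝ) ∈ convexHull ℝ V)
    {a : Submodule.span ℝ (convexHull ℝ V)} (hne : (heights (convexHull ℝ V) a).Nonempty) :
    ∃ ψ ∈ (dualSet (convexHull ℝ V)).extremePoints ℝ,
      ψ a = sInf (heights (convexHull ℝ V) a) := by
  obtain ⟨s, hs0, hs⟩ := hne
  obtain ⟨ψ, hψ, hmax⟩ := exists_mem_extremePoints_dualSet_forall_apply_le hV hs0 hs
  refine ⟨ψ, hψ, le_antisymm ?_ ?_⟩
  · exact le_csInf ⟨s, hs0, hs⟩ fun r hr => apply_le_of_mem_dualSet_convexHull hψ.1 hr.1 hr.2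
  by_contra! hlt
  have hψ0 : 0 ≤ ψ a := by simpa using hmax 0 fun _ _ => by simp
  obtain ⟨t, hψt, htμ⟩ := exists_between hlt
  have ht : (a : Fin n → ℝ) ∉ t • convexHull ℝ V := fun hat =>
    (csInf_le (heights_bddBelow _ _) (⟨by linarith, hat⟩ : t ∈ heights _ _)).not_gt htμ
  obtain ⟨φ, hφ, hφa⟩ := exists_mem_dualSet_lt_apply (convex_convexHull ℝ V)
    (hV.isCompact_convexHull ℝ).isClosed h0 (by linarith) ht
  linarith [hmax φ hφ]

lemma exists_dualDen_mul_sInf_heights_eq_intCast {V : Set (Fin n → ℝ)} (hV : V.Finite)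
    (hVrat : ∀ v ∈ V, IsRatPt v) (h0 : (0 : Fin n → ℝ) ∈ convexHull ℝ V) {m : Fin n → ℝ}
    (hm : IsLat m) (hne : (heights (convexHull ℝ V) m).Nonempty) :
    ∃ z : ℤ, dualDen (convexHull ℝ V) * sInf (heights (convexHull ℝ V) m) = z := by
  have hmU : m ∈ Submodule.span ℝ (convexHull ℝ V) := by
    obtain ⟨s, -, p, hp, rfl⟩ := hne
    exact Submodule.smul_mem _ s (Submodule.subset_span hp)
  obtain ⟨ψ, hψ, hψa⟩ :=
    exists_mem_extremePoints_dualSet_apply_eq_sInf_heights hV h0 (a := ⟨m, hmU⟩) hne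
  obtain ⟨z, hz⟩ := (dualDen_spec hV hVrat).2 ψ hψ ⟨m, hmU⟩ hm
  exact ⟨z, by rw [← hψa, ← hz]; rfl⟩

lemma exists_add_div_eq_intCast {d : ℕ} (hd : 0 < d) {μ : ℝ} {z : ℤ} (h : d * μ = z) :
    ∃ i < d, ∃ k : ℤ, μ + i / d = k := by
  have hd' : (0 : ℤ) < d := by exact_mod_cast hd
  have hr0 := Int.emod_nonneg (-z) hd'.ne'
  have hrd := Int.emod_lt_of_pos (-z) hd'
  refine ⟨((-z) % d).toNat, by omega, -((-z) / d), ?_⟩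
  have hr : (((-z) % d).toNat : ℝ) = ((-z) % d : ℤ) := by exact_mod_cast Int.toNat_of_nonneg hr0
  have hdiv : z + (-z) % d = -((-z) / d) * d := by rw [Int.emod_def]; ring
  have hdR : (d : ℝ) ≠ 0 := by positivity
  have hμ : μ = z / d := by rw [eq_div_iff hdR, mul_comm, h]
  rw [hr, hμ, ← add_div, div_eq_iff hdR]
  exact_mod_cast hdiv

lemma eq_of_add_div_eq_intCast {d i j : ℕ} (hi : i < d) (hj : j < d) {μ : ℝ} {k l : ℤ}
    (hk : μ + i / d = k) (hl : μ + j / d = l) : i = j := by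
  have hdR : (d : ℝ) ≠ 0 := Nat.cast_ne_zero.2 (by omega)
  have hij : (i : ℤ) - j = d * (k - l) := by
    have : (i : ℝ) - j = d * (k - l) := by
      rw [← hk, ← hl]
      field_simp
      ring
    exact_mod_cast this
  have := Int.eq_zero_of_abs_lt_dvd ⟨_, hij⟩ (by rw [abs_lt]; omega)
  omega

theorem llenv_disjoint_union_shifted_general {n : ℕ} (P : Set (Fin n → ℝ))
    (hP : IsRatPolytope P) (hP0 : (0 : Fin n → ℝ) ∈ P) :
    (llenv P = ⋃ i ∈ Finset.range (dualDen P),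
        (fun x => x - ((i : ℝ) / (dualDen P : ℝ)) • eLast n) ''
          latt ((fun x => x + ((i : ℝ) / (dualDen P : ℝ)) • eLast n) '' lenv P)) ∧
      ∀ i ∈ Finset.range (dualDen P), ∀ j ∈ Finset.range (dualDen P), i ≠ j →
        Disjoint
          ((fun x => x - ((i : ℝ) / (dualDen P : ℝ)) • eLast n) ''
            latt ((fun x => x + ((i : ℝ) / (dualDen P : ℝ)) • eLast n) '' lenv P))
          ((fun x => x - ((j : ℝ) / (dualDen P : ℝ)) • eLast n) ''
            latt ((fun x => x + ((j : ℝ) / (dualDen P : ℝ)) • eLast n) '' lenv P)) := by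
  obtain ⟨V, hVrat, rfl⟩ := hP
  refine ⟨Set.ext fun y => ?_, fun i hi j hj hij => Set.disjoint_left.2 fun y hyi hyj => hij ?_⟩
  · simp only [Set.mem_iUnion, Finset.mem_range, exists_prop, mem_shifted_latt_lenv_iff,
      mem_llenv_iff (convex_convexHull ℝ _) hP0]
    constructor
    · rintro ⟨m, hm, hne, rfl⟩
      obtain ⟨z, hz⟩ :=
        exists_dualDen_mul_sInf_heights_eq_intCast V.finite_toSet hVrat hP0 hm hne
      obtain ⟨i, hi, hk⟩ := exists_add_div_eq_intCast (dualDen_spec V.finite_toSet hVrat).1 hz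
      exact ⟨i, hi, m, hm, hne, hk, rfl⟩
    · rintro ⟨i, -, m, hm, hne, -, rfl⟩
      exact ⟨m, hm, hne, rfl⟩
  · obtain ⟨m, -, -, ⟨k, hk⟩, rfl⟩ := mem_shifted_latt_lenv_iff.1 hyi
    obtain ⟨m', -, -, ⟨l, hl⟩, hmm'⟩ := mem_shifted_latt_lenv_iff.1 hyj
    obtain rfl := (Fin.snoc_inj.1 hmm').1
    exact eq_of_add_div_eq_intCast (Finset.mem_range.1 hi) (Finset.mem_range.1 hj) hk hl

/-- Proposition 4.1(a) (the lower lattice envelope as a disjoint union of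
shifted lattice lower envelopes). -/
theorem llenv_disjoint_union_shifted {n : ℕ} (hn : 1 ≤ n) (P : Set (Fin n → ℝ))
    (hP : IsRatPolytope P) (hP0 : (0 : Fin n → ℝ) ∈ P) :
    (llenv P = ⋃ i ∈ Finset.range (dualDen P),
        (fun x => x - ((i : ℝ) / (dualDen P : ℝ)) • eLast n) ''
          latt ((fun x => x + ((i : ℝ) / (dualDen P : ℝ)) • eLast n) '' lenv P)) ∧
      ∀ i ∈ Finset.range (dualDen P), ∀ j ∈ Finset.range (dualDen P), i ≠ j →
        Disjoint
          ((fun x => x - ((i : ℝ) / (dualDen P : ℝ)) • eLast n) ''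
            latt ((fun x => x + ((i : ℝ) / (dualDen P : ℝ)) • eLast n) '' lenv P))
          ((fun x => x - ((j : ℝ) / (dualDen P : ℝ)) • eLast n) ''
            latt ((fun x => x + ((j : ℝ) / (dualDen P : ℝ)) • eLast n) '' lenv P)) :=
  llenv_disjoint_union_shifted_general P hP hP0

end ArxivFreeSum
end
end
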